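/- The autonomous d₄P^(II) map preserves its degree-eight invariant: for all a, b, c, d, x, y, z, u, x₁ in ℂ with a·(1 − y²)·(1 − x²) ≠ 0, if a·(1 − y²)·(1 − x²)·x₁ = d − a·(1 − y²)·(u − y·z² − u·z² − 2xyz − x²·y) − c·y − b·(1 − y²)·(z + x), then Δ₈(x₁, x, y, z) = Δ₈(x, y, z, u). -/
import Mathlib


/-- The degree-eight invariant `Δ₈` of the autonomous `d₄P^(II)` map, in affine coordinates. -/
noncomputable def Δ₈ (a b c d x y z u : ℂ) : ℂ :=
  a * ((u^2 + z^2 + y^2 + x^2)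
        - z^2 * y^2 * (u*z + x*y + y*z)^2
        - (2*y*u*z^2 + 2*u*z*x*y + x^2*z^2 + 2*x*z*y^2 + 2*x^2*y^2 + u^2*y^2
            + 2*z^2*y^2 + 2*u^2*z^2)
        + (2*x^2*y^2*z^2 + 2*u*y^3*z^2 + 2*x*y^2*z^3 + 2*y*u*z^4 + z^2*y^4
            + y^2*z^4 + 2*u^2*y^2*z^2 + x^2*y^4 + 2*u*x*y^3*z + 2*u*x*y*z^3
            + 2*x*z*y^4 + z^4*u^2))
    + b * (1 - z^2) * (1 - y^2) * (z + x) * (u + y)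
    + c * (x*z - z^2*y^2 + y*u - y*u*z^2 - x*z*y^2)
    - d * (x + z - z*y^2 - x*y^2 - u*z^2 + u - y*z^2 + y)

/-- The autonomous `d₄P^(II)` map preserves its degree-eight invariant `Δ₈`. -/
theorem d4PII_preserves_Delta8 (a b c d x y z u x₁ : ℂ)
    (h : a * (1 - y^2) * (1 - x^2) ≠ 0)
    (hrec : a * (1 - y^2) * (1 - x^2) * x₁ =
      d - a * (1 - y^2) * (u - y*z^2 - u*z^2 - 2*x*y*z - x^2*y)
        - c * y - b * (1 - y^2) * (z + x)) :
    Δ₈ a b c d x₁ x y z = Δ₈ a b c d x y z u := by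
  set k : ℂ := a * (1 - y^2) * (1 - x^2) with hk
  set E : ℂ := d - a * (1 - y^2) * (u - y*z^2 - u*z^2 - 2*x*y*z - x^2*y)
        - c * y - b * (1 - y^2) * (z + x) with hE
  have key : k^2 * Δ₈ a b c d x₁ x y z = k^2 * Δ₈ a b c d x y z u := by
    unfold Δ₈
    linear_combination
      ((a*(1-x^2)^2*(1-y^2)) * (k*x₁ + E)
        + (a*(-2*x^3*y^3*z - 2*x^4*y^3 - 2*z*x*y - 2*y*x^2 + 2*x^2*y^3
              + 2*z*x^3*y + 2*z*x*y^3 + 2*y*x^4)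
            + b*(1-y^2)*(1-x^2)*(z+x) + c*y*(1-x^2) - d*(1-x^2)) * k) * hrec
  have hk2 : k^2 ≠ 0 := pow_ne_zero _ h
  exact mul_left_cancel₀ hk2 key
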